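/- arXiv:2007.10304 — 6 statements merged into one kernel-verified Lean document; each statement's English description precedes it below -/
import Mathlib

section
/- Fix integers K ≥ 1 and k with 0 ≤ k ≤ K−1, and reals η > 0, τ > 0, η_n > 0, q > 0, r ≥ 0, i_max > 0. Let μ_T : {1,…,K} → ℝ satisfy μ_T(t) ≥ 0 for all t, and define μ_e(l) = η·∑_{t=l+1}^{K} τ^{t−l−1}·μ_T(t) for l ∈ {0,…,K−1}. Let s : {0,…,K} → ℝ and i_n : {0,…,K−1} → ℝ satisfy the state-of-charge dynamics s(t+1) = s(t) + η_n·i_n(t), with i_n(t) ≥ 0 and s(t+1) ≤ 1 for all t ∈ {0,…,K−1}. Let i_total, e : {0,…,K−1} → ℝ satisfy, for every l ∈ {0,…,K−1}: i_total(l) > 0, e(l) ≥ (i_total(l))², and the complementary slackness condition μ_e(l)·((i_total(l))² − e(l)) = 0. Assume at index k there are reals μ̄_i ≥ 0, μ_i ≥ 0, μ̄_s ≥ 0 and I ∈ {0,1} such that i_n(k) < i_max, μ̄_i·(i_n(k) − i_max) = 0, and the stationarity identity 2·μ_e(k)·i_total(k) = η_n·(2q·∑_{t=k+1}^{K} (1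 − s(t)) + I·μ̄_s) + μ_i − 2r·i_n(k) − μ̄_i holds. If either (r = 0 and s(k+1) < 1) or (r > 0 and s(k+1) < (M + s(0))/(M + 1), where M = (q/r)·η_n²), then e(l) = (i_total(l))² for all l ∈ {0,…,k}. -/
/-!
At a KKT point the throttled charger's stationarity condition reads
`2 μe(k) i_total(k) = ηn (2q ∑ (1 - s) + I μ̄s) + μi - 2 r iN(k)` once `μ̄i = 0`.
The state-of-charge hypothesis says precisely that the marginal charging cost
`r ηn iN(k) ≤ r (s(k+1) - s(0))` is beaten by the marginal tracking benefit
`q ηn² (1 - s(k+1))`, so the right-hand side is positive and hence `μe(k) > 0`.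
Since `μe` is a discounted tail sum of the nonnegative `μT`, we get
`μe(l) ≥ τ^(k-l) μe(k) > 0` for every `l ≤ k`, and complementary slackness forces
`e(l) = i_total(l)²`.
-/

open Finset

lemma le_of_forall_le_succ {α : Type*} [Preorder α] {f : ℕ → α} {k : ℕ}
    (h : ∀ n < k, f n ≤ f (n + 1)) : f 0 ≤ f k := by
  induction k with
  | zero => exact le_rfl
  | succ k ih => exact (ih fun n hn ↦ h n (by omega)).trans (h k k.lt_succ_self)

lemma pow_mul_discounted_sum_le {τ : ℝ} (hτ : 0 ≤ τ) {μ : ℕ → ℝ} {l k K : ℕ} (hlk : l ≤ k)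
    (hμ : ∀ t ∈ Icc (l + 1) K, 0 ≤ μ t) :
    τ ^ (k - l) * ∑ t ∈ Icc (k + 1) K, τ ^ (t - k - 1) * μ t ≤
      ∑ t ∈ Icc (l + 1) K, τ ^ (t - l - 1) * μ t := by
  have hshift : τ ^ (k - l) * ∑ t ∈ Icc (k + 1) K, τ ^ (t - k - 1) * μ t =
      ∑ t ∈ Icc (k + 1) K, τ ^ (t - l - 1) * μ t := by
    rw [mul_sum]
    refine sum_congr rfl fun t ht ↦ ?_
    have : t - l - 1 = (k - l) + (t - k - 1) := by have := (mem_Icc.mp ht).1; omega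
    rw [this, pow_add, mul_assoc]
  rw [hshift]
  exact sum_le_sum_of_subset_of_nonneg (Icc_subset_Icc_left (by omega))
    fun t ht _ ↦ mul_nonneg (pow_nonneg hτ _) (hμ t ht)

lemma one_sub_le_sum_Icc_one_sub {s : ℕ → ℝ} {k K : ℕ} (hkK : k + 1 ≤ K)
    (hs : ∀ t, t ≤ K - 1 → s (t + 1) ≤ 1) :
    1 - s (k + 1) ≤ ∑ t ∈ Icc (k + 1) K, (1 - s t) := by
  refine single_le_sum (f := fun t ↦ 1 - s t) (fun t ht ↦ ?_) (mem_Icc.mpr ⟨le_rfl, hkK⟩)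
  obtain ⟨h₁, h₂⟩ := mem_Icc.mp ht
  obtain ⟨u, rfl⟩ := Nat.exists_eq_add_of_le h₁
  exact sub_nonneg.mpr (by simpa [add_right_comm] using hs (k + u) (by omega))

lemma mul_sub_lt_of_soc_lt {q r ηn s₀ s₁ : ℝ} (hq : 0 < q) (hηn : 0 < ηn)
    (hcond : (r = 0 ∧ s₁ < 1) ∨
      (0 < r ∧ s₁ < ((q / r) * ηn ^ 2 + s₀) / ((q / r) * ηn ^ 2 + 1))) :
    r * (s₁ - s₀) < q * ηn ^ 2 * (1 - s₁) := by
  rcases hcond with ⟨rfl, hs₁⟩ | ⟨hr, hs₁⟩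
  · have : 0 < q * ηn ^ 2 * (1 - s₁) := by have := sub_pos.mpr hs₁; positivity
    simpa using this
  · have hM : 0 < q / r * ηn ^ 2 + 1 := by positivity
    rw [lt_div_iff₀ hM] at hs₁
    have hscaled := mul_lt_mul_of_pos_left hs₁ hr
    field_simp at hscaled
    linarith

lemma stationarity_rhs_pos {ηn q r S Iμ μi x : ℝ} (hηn : 0 < ηn) (hIμ : 0 ≤ Iμ) (hμi : 0 ≤ μi)
    (hcost : r * (ηn * x) < q * ηn ^ 2 * S) :
    0 < ηn * (2 * q * S + Iμ) + μi - 2 * r * x := by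
  refine pos_of_mul_pos_right (a := ηn) ?_ hηn.le
  have : ηn * (ηn * (2 * q * S + Iμ) + μi - 2 * r * x) =
      2 * (q * ηn ^ 2 * S - r * (ηn * x)) + ηn ^ 2 * Iμ + ηn * μi := by ring
  rw [this]
  have := sub_pos.mpr hcost
  positivity

theorem socp_relaxation_tightness_general
    (K k : ℕ) (hK : 1 ≤ K) (hk : k ≤ K - 1)
    (η τ ηn q r i_max : ℝ)
    (hη : 0 < η) (hτ : 0 < τ) (hηn : 0 < ηn) (hq : 0 < q) (hr : 0 ≤ r)
    (μT : ℕ → ℝ) (hμT : ∀ t, 1 ≤ t → t ≤ K → 0 ≤ μT t)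
    (μe : ℕ → ℝ)
    (hμe : ∀ l, l ≤ K - 1 →
      μe l = η * ∑ t ∈ Finset.Icc (l + 1) K, τ ^ (t - l - 1) * μT t)
    (s iN : ℕ → ℝ)
    (hdyn : ∀ t, t ≤ K - 1 → s (t + 1) = s t + ηn * iN t)
    (hiN : ∀ t, t ≤ K - 1 → 0 ≤ iN t)
    (hs1 : ∀ t, t ≤ K - 1 → s (t + 1) ≤ 1)
    (i_total e : ℕ → ℝ)
    (hipos : ∀ l, l ≤ K - 1 → 0 < i_total l)
    (hcs : ∀ l, l ≤ K - 1 → μe l * ((i_total l) ^ 2 - e l) = 0)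
    (μbar_i μ_i μbar_s I : ℝ)
    (hμ_i : 0 ≤ μ_i) (hμbar_s : 0 ≤ μbar_s)
    (hI : I = 0 ∨ I = 1)
    (hthrottle : iN k < i_max)
    (hcs_i : μbar_i * (iN k - i_max) = 0)
    (hstat : 2 * μe k * i_total k =
      ηn * (2 * q * (∑ t ∈ Finset.Icc (k + 1) K, (1 - s t)) + I * μbar_s)
        + μ_i - 2 * r * iN k - μbar_i)
    (hcond : (r = 0 ∧ s (k + 1) < 1) ∨
      (0 < r ∧ s (k + 1) < ((q / r) * ηn ^ 2 + s 0) / ((q / r) * ηn ^ 2 + 1))) :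
    ∀ l, l ≤ k → e l = (i_total l) ^ 2 := by
  intro l hl
  have hμbar_i : μbar_i = 0 :=
    (mul_eq_zero.mp hcs_i).resolve_right (sub_ne_zero.mpr hthrottle.ne)
  have hIμ : 0 ≤ I * μbar_s := by rcases hI with rfl | rfl <;> simp [hμbar_s]
  have hs_mono : s 0 ≤ s k := le_of_forall_le_succ fun t ht ↦ by
    rw [hdyn t (by omega)]
    exact le_add_of_nonneg_right (mul_nonneg hηn.le (hiN t (by omega)))
  have hcost : r * (ηn * iN k) < q * ηn ^ 2 * ∑ t ∈ Icc (k + 1) K, (1 - s t) := calc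
    r * (ηn * iN k) ≤ r * (s (k + 1) - s 0) := by
      gcongr; linarith [hdyn k hk]
    _ < q * ηn ^ 2 * (1 - s (k + 1)) := mul_sub_lt_of_soc_lt hq hηn hcond
    _ ≤ q * ηn ^ 2 * ∑ t ∈ Icc (k + 1) K, (1 - s t) := by
      gcongr; exact one_sub_le_sum_Icc_one_sub (by omega) hs1
  have hμe_k : 0 < μe k := by
    have hrhs : 0 < 2 * μe k * i_total k := by
      rw [hstat, hμbar_i, sub_zero]
      exact stationarity_rhs_pos hηn hIμ hμ_i hcost
    linarith [pos_of_mul_pos_left hrhs (hipos k hk).le]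
  have hμe_l : 0 < μe l := calc
    0 < τ ^ (k - l) * μe k := by positivity
    _ ≤ μe l := by
      rw [hμe k hk, hμe l (by omega), mul_left_comm]
      exact mul_le_mul_of_nonneg_left (pow_mul_discounted_sum_le hτ.le hl
        fun t ht ↦ hμT t (by have := (mem_Icc.mp ht).1; omega) (mem_Icc.mp ht).2) hη.le
  exact (sub_eq_zero.mp ((mul_eq_zero.mp (hcs l (by omega))).resolve_left hμe_l.ne')).symm

/-- Theorem 1 (Main Result): tightness of the SOCP relaxation of the EV charging
problem. If at a KKT point some EV charger is throttled at timestep `k`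
(`i_n k < i_max`) and its state of charge is sufficiently low, then the relaxed
quadratic constraint `e l ≥ (i_total l)^2` is tight for all timesteps `l ≤ k`. -/
theorem socp_relaxation_tightness
    (K k : ℕ) (hK : 1 ≤ K) (hk : k ≤ K - 1)
    (η τ ηn q r i_max : ℝ)
    (hη : 0 < η) (hτ : 0 < τ) (hηn : 0 < ηn) (hq : 0 < q) (hr : 0 ≤ r)
    (himax : 0 < i_max)
    (μT : ℕ → ℝ) (hμT : ∀ t, 1 ≤ t → t ≤ K → 0 ≤ μT t)
    (μe : ℕ → ℝ)
    (hμe : ∀ l, l ≤ K - 1 →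
      μe l = η * ∑ t ∈ Finset.Icc (l + 1) K, τ ^ (t - l - 1) * μT t)
    (s iN : ℕ → ℝ)
    (hdyn : ∀ t, t ≤ K - 1 → s (t + 1) = s t + ηn * iN t)
    (hiN : ∀ t, t ≤ K - 1 → 0 ≤ iN t)
    (hs1 : ∀ t, t ≤ K - 1 → s (t + 1) ≤ 1)
    (i_total e : ℕ → ℝ)
    (hipos : ∀ l, l ≤ K - 1 → 0 < i_total l)
    (hrelax : ∀ l, l ≤ K - 1 → (i_total l) ^ 2 ≤ e l)
    (hcs : ∀ l, l ≤ K - 1 → μe l * ((i_total l) ^ 2 - e l) = 0)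
    (μbar_i μ_i μbar_s I : ℝ)
    (hμbar_i : 0 ≤ μbar_i) (hμ_i : 0 ≤ μ_i) (hμbar_s : 0 ≤ μbar_s)
    (hI : I = 0 ∨ I = 1)
    (hthrottle : iN k < i_max)
    (hcs_i : μbar_i * (iN k - i_max) = 0)
    (hstat : 2 * μe k * i_total k =
      ηn * (2 * q * (∑ t ∈ Finset.Icc (k + 1) K, (1 - s t)) + I * μbar_s)
        + μ_i - 2 * r * iN k - μbar_i)
    (hcond : (r = 0 ∧ s (k + 1) < 1) ∨
      (0 < r ∧ s (k + 1) < ((q / r) * ηn ^ 2 + s 0) / ((q / r) * ηn ^ 2 + 1))) :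
    ∀ l, l ≤ k → e l = (i_total l) ^ 2 :=
  socp_relaxation_tightness_general K k hK hk η τ ηn q r i_max hη hτ hηn hq hr μT hμT μe hμe s iN
    hdyn hiN hs1 i_total e hipos hcs μbar_i μ_i μbar_s I hμ_i hμbar_s hI hthrottle hcs_i hstat hcond
end

section
/- Fix integers K ≥ 1 and k with 0 ≤ k ≤ K−1 and reals η_n > 0, q > 0. Let s : {0,…,K} → ℝ and i_n : {0,…,K−1} → ℝ satisfy s(t+1) = s(t) + η_n·i_n(t), i_n(t) ≥ 0, and s(t+1) ≤ 1 for all t ∈ {0,…,K−1}. Let μ_e ≥ 0, i_total > 0, μ_i ≥ 0, μ̄_s ≥ 0 be reals, let I ∈ {0,1}, and suppose the stationarity identity 2·μ_e·i_total = η_n·(2q·∑_{t=k+1}^{K} (1 − s(t)) + I·μ̄_s) + μ_i − 0·i_n(k) − 0 holds (the charge-rate penalty weight is r = 0 and the multiplier of the active upper charging limit is μ̄_i = 0). If s(k+1) < 1, then μ_e > 0. -/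
lemma Finset.sum_Icc_sub_pos {R : Type*} [AddCommGroup R] [PartialOrder R]
    [IsOrderedCancelAddMonoid R] {s : ℕ → R} {c : R} {a b : ℕ} (hab : a ≤ b)
    (hle : ∀ t ∈ Finset.Icc a b, s t ≤ c) (hlt : s a < c) :
    0 < ∑ t ∈ Finset.Icc a b, (c - s t) :=
  Finset.sum_pos' (fun t ht => sub_nonneg.2 (hle t ht))
    ⟨a, Finset.left_mem_Icc.2 hab, sub_pos.2 hlt⟩

theorem socp_tightness_core_r_zero_general
    (K k : ℕ) (hK : 1 ≤ K) (hk : k ≤ K - 1)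
    (ηn q : ℝ) (hηn : 0 < ηn) (hq : 0 < q)
    (s iN : ℕ → ℝ)
    (hs1 : ∀ t, t ≤ K - 1 → s (t + 1) ≤ 1)
    (μe i_total μ_i μbar_s I : ℝ)
    (hitot : 0 < i_total) (hμ_i : 0 ≤ μ_i) (hμbar_s : 0 ≤ μbar_s)
    (hI : I = 0 ∨ I = 1)
    (hstat : 2 * μe * i_total =
      ηn * (2 * q * (∑ t ∈ Finset.Icc (k + 1) K, (1 - s t)) + I * μbar_s)
        + μ_i - 0 * iN k - 0)
    (hsoc : s (k + 1) < 1) :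
    0 < μe := by
  have hdeficit : 0 < ∑ t ∈ Finset.Icc (k + 1) K, (1 - s t) := by
    refine Finset.sum_Icc_sub_pos (by omega) (fun t ht => ?_) hsoc
    obtain ⟨hkt, htK⟩ := Finset.mem_Icc.1 ht
    simpa [Nat.sub_add_cancel (by omega : 1 ≤ t)] using hs1 (t - 1) (by omega)
  have hI_nonneg : 0 ≤ I := by rcases hI with rfl | rfl <;> norm_num
  have hrhs : 0 < 2 * μe * i_total := by
    rw [hstat, zero_mul, sub_zero, sub_zero]
    positivity
  exact pos_of_mul_pos_right (pos_of_mul_pos_left hrhs hitot.le) zero_le_two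

/-- The `r = 0` case of the core step of Theorem 1: with zero charge-rate penalty
and the EV throttled (so the upper-bound multiplier vanishes), if the state of
charge at time `k+1` is strictly below `1`, then the multiplier `μe` of the
relaxed quadratic constraint is strictly positive. -/
theorem socp_tightness_core_r_zero
    (K k : ℕ) (hK : 1 ≤ K) (hk : k ≤ K - 1)
    (ηn q : ℝ) (hηn : 0 < ηn) (hq : 0 < q)
    (s iN : ℕ → ℝ)
    (hdyn : ∀ t, t ≤ K - 1 → s (t + 1) = s t + ηn * iN t)
    (hiN : ∀ t, t ≤ K - 1 → 0 ≤ iN t)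
    (hs1 : ∀ t, t ≤ K - 1 → s (t + 1) ≤ 1)
    (μe i_total μ_i μbar_s I : ℝ)
    (hμe : 0 ≤ μe) (hitot : 0 < i_total) (hμ_i : 0 ≤ μ_i) (hμbar_s : 0 ≤ μbar_s)
    (hI : I = 0 ∨ I = 1)
    (hstat : 2 * μe * i_total =
      ηn * (2 * q * (∑ t ∈ Finset.Icc (k + 1) K, (1 - s t)) + I * μbar_s)
        + μ_i - 0 * iN k - 0)
    (hsoc : s (k + 1) < 1) :
    0 < μe :=
  socp_tightness_core_r_zero_general K k hK hk ηn q hηn hq s iN hs1 μe i_total μ_i μbar_s I hitot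
    hμ_i hμbar_s hI hstat hsoc
end

section
/- Fix integers K ≥ 1 and k with 0 ≤ k ≤ K−1 and reals η_n > 0, q > 0, r > 0, i_max > 0. Let s : {0,…,K} → ℝ and i_n : {0,…,K−1} → ℝ satisfy s(t+1) = s(t) + η_n·i_n(t), i_n(t) ≥ 0, and s(t+1) ≤ 1 for all t ∈ {0,…,K−1}. Let μ_e ≥ 0, i_total > 0, μ_i ≥ 0, μ̄_i ≥ 0, μ̄_s ≥ 0 be reals with i_n(k) < i_max and μ̄_i·(i_n(k) − i_max) = 0, let I ∈ {0,1}, and suppose the stationarity identity 2·μ_e·i_total = η_n·(2q·∑_{t=k+1}^{K} (1 − s(t)) + I·μ̄_s) + μ_i − 2r·i_n(k) − μ̄_i holds. Define M = (q/r)·η_n². If s(k+1) < (M + s(0))/(M + 1), then μ_e > 0. -/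
/-!
Complementary slackness kills `μ̄_i`, and every other term of the stationarity identity except
`2q·η_n·∑(1 - s t) - 2r·i_n(k)` is nonnegative. That remainder is positive: the sum is at least
`1 - s(k+1)` since `s ≤ 1`, and `η_n·i_n(k) ≤ s(k+1) - s(0)` since the state of charge never
decreases, while the threshold `s(k+1) < (M + s(0))/(M + 1)` says precisely
`s(k+1) - s(0) < M·(1 - s(k+1))`. Hence `2μ_e·i_total > 0`.
-/

open Finset

lemma le_sub_apply_zero_of_succ_eq_add {α : Type*} [AddCommGroup α] [PartialOrder α]
    [IsOrderedAddMonoid α] {s u : ℕ → α} {k : ℕ}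
    (hs : ∀ t ≤ k, s (t + 1) = s t + u t) (hu : ∀ t ≤ k, 0 ≤ u t) :
    u k ≤ s (k + 1) - s 0 := by
  have hsum : ∑ t ∈ range (k + 1), u t = s (k + 1) - s 0 := by
    rw [← sum_range_sub]
    refine sum_congr rfl fun t ht => ?_
    rw [hs t (Nat.lt_succ_iff.mp (mem_range.mp ht)), add_sub_cancel_left]
  rw [← hsum]
  exact single_le_sum (fun t ht => hu t (Nat.lt_succ_iff.mp (mem_range.mp ht)))
    (self_mem_range_succ k)

lemma sub_lt_mul_one_sub_of_lt_div {M a x : ℝ} (hM : 0 ≤ M) (h : x < (M + a) / (M + 1)) :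
    x - a < M * (1 - x) := by
  rw [lt_div_iff₀ (by positivity)] at h
  linarith

lemma mul_lt_mul_one_sub_of_charge_le {η q r i x x₀ : ℝ} (hη : 0 < η) (hq : 0 ≤ q) (hr : 0 < r)
    (hcharge : η * i ≤ x - x₀) (h : x < (q / r * η ^ 2 + x₀) / (q / r * η ^ 2 + 1)) :
    r * i < q * η * (1 - x) := by
  have hgap := sub_lt_mul_one_sub_of_lt_div (by positivity) h
  have hscaled : r * η * i < q * η ^ 2 * (1 - x) := by
    calc r * η * i = r * (η * i) := by ring
      _ ≤ r * (x - x₀) := mul_le_mul_of_nonneg_left hcharge hr.le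
      _ < r * (q / r * η ^ 2 * (1 - x)) := mul_lt_mul_of_pos_left (by linarith) hr
      _ = q * η ^ 2 * (1 - x) := by field_simp
  exact lt_of_mul_lt_mul_left (a := η) (by linarith) hη.le

theorem socp_tightness_core_r_pos_general
    (K k : ℕ) (hK : 1 ≤ K) (hk : k ≤ K - 1)
    (ηn q r i_max : ℝ) (hηn : 0 < ηn) (hq : 0 < q) (hr : 0 < r)
    (s iN : ℕ → ℝ)
    (hdyn : ∀ t, t ≤ K - 1 → s (t + 1) = s t + ηn * iN t)
    (hiN : ∀ t, t ≤ K - 1 → 0 ≤ iN t)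
    (hs1 : ∀ t, t ≤ K - 1 → s (t + 1) ≤ 1)
    (μe i_total μ_i μbar_i μbar_s I : ℝ)
    (hitot : 0 < i_total) (hμ_i : 0 ≤ μ_i)
    (hμbar_s : 0 ≤ μbar_s)
    (hI : I = 0 ∨ I = 1)
    (hthrottle : iN k < i_max)
    (hcs_i : μbar_i * (iN k - i_max) = 0)
    (hstat : 2 * μe * i_total =
      ηn * (2 * q * (∑ t ∈ Finset.Icc (k + 1) K, (1 - s t)) + I * μbar_s)
        + μ_i - 2 * r * iN k - μbar_i)
    (hsoc : s (k + 1) < ((q / r) * ηn ^ 2 + s 0) / ((q / r) * ηn ^ 2 + 1)) :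
    0 < μe := by
  have hμbar_i : μbar_i = 0 :=
    (mul_eq_zero.mp hcs_i).resolve_right (sub_ne_zero.mpr hthrottle.ne)
  have hcharge : ηn * iN k ≤ s (k + 1) - s 0 :=
    le_sub_apply_zero_of_succ_eq_add (fun t ht => hdyn t (ht.trans hk))
      (fun t ht => mul_nonneg hηn.le (hiN t (ht.trans hk)))
  have hgrad := mul_lt_mul_one_sub_of_charge_le hηn hq.le hr hcharge hsoc
  have hsum : 1 - s (k + 1) ≤ ∑ t ∈ Icc (k + 1) K, (1 - s t) := by
    refine single_le_sum (f := fun t => 1 - s t) (fun t ht => ?_) (mem_Icc.mpr ⟨le_rfl, by omega⟩)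
    obtain ⟨hlo, hhi⟩ := mem_Icc.mp ht
    obtain ⟨u, rfl⟩ : ∃ u, t = u + 1 := ⟨t - 1, by omega⟩
    linarith [hs1 u (by omega)]
  have hIμ : 0 ≤ I * μbar_s := by rcases hI with rfl | rfl <;> simp [hμbar_s]
  have hpos : 0 < 2 * μe * i_total := by
    rw [hstat, hμbar_i]
    linarith [mul_le_mul_of_nonneg_left hsum (by positivity : 0 ≤ 2 * q * ηn),
      mul_nonneg hηn.le hIμ]
  linarith [pos_of_mul_pos_left hpos hitot.le]

/-- The `r > 0` case of the core step of Theorem 1: with positive charge-rate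
penalty `r` and the EV throttled at timestep `k`, if the state of charge at time
`k+1` is strictly below `(M + s 0)/(M + 1)` with `M = (q/r)·ηn²`, then the
multiplier `μe` of the relaxed quadratic constraint is strictly positive. -/
theorem socp_tightness_core_r_pos
    (K k : ℕ) (hK : 1 ≤ K) (hk : k ≤ K - 1)
    (ηn q r i_max : ℝ) (hηn : 0 < ηn) (hq : 0 < q) (hr : 0 < r)
    (himax : 0 < i_max)
    (s iN : ℕ → ℝ)
    (hdyn : ∀ t, t ≤ K - 1 → s (t + 1) = s t + ηn * iN t)
    (hiN : ∀ t, t ≤ K - 1 → 0 ≤ iN t)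
    (hs1 : ∀ t, t ≤ K - 1 → s (t + 1) ≤ 1)
    (μe i_total μ_i μbar_i μbar_s I : ℝ)
    (hμe : 0 ≤ μe) (hitot : 0 < i_total) (hμ_i : 0 ≤ μ_i)
    (hμbar_i : 0 ≤ μbar_i) (hμbar_s : 0 ≤ μbar_s)
    (hI : I = 0 ∨ I = 1)
    (hthrottle : iN k < i_max)
    (hcs_i : μbar_i * (iN k - i_max) = 0)
    (hstat : 2 * μe * i_total =
      ηn * (2 * q * (∑ t ∈ Finset.Icc (k + 1) K, (1 - s t)) + I * μbar_s)
        + μ_i - 2 * r * iN k - μbar_i)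
    (hsoc : s (k + 1) < ((q / r) * ηn ^ 2 + s 0) / ((q / r) * ηn ^ 2 + 1)) :
    0 < μe :=
  socp_tightness_core_r_pos_general K k hK hk ηn q r i_max hηn hq hr s iN hdyn hiN hs1 μe i_total
    μ_i μbar_i μbar_s I hitot hμ_i hμbar_s hI hthrottle hcs_i hstat hsoc
end

section
/- Let K ≥ 1 be an integer and η > 0, τ > 0 reals, and let μ_T : {1,…,K} → ℝ satisfy μ_T(t) ≥ 0 for all t. Define μ_e(l) = η·∑_{t=l+1}^{K} τ^{t−l−1}·μ_T(t) for l ∈ {0,…,K−1}. Suppose k ∈ {0,…,K−1} is the largest index with μ_e(k) > 0, i.e., μ_e(k) > 0 and μ_e(m) = 0 for all m with k < m ≤ K−1. Then μ_T(k+1) > 0 and μ_T(m) = 0 for all m with k+1 < m ≤ K. -/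
/-!
Peeling off the first term of the sum gives the recursion `μe l = η μT (l+1) + τ μe (l+1)`.
Since `μe (k+1) = 0` is a positively weighted sum of the nonnegative `μT t`, `k+1 < t ≤ K`,
all of these vanish, and the recursion at `l = k` reduces to `μe k = η μT (k+1) > 0`.
-/

open Finset

section DiscountedTail

variable {R : Type*}

def discountedTail [CommSemiring R] (τ : R) (μ : ℕ → R) (K l : ℕ) : R :=
  ∑ t ∈ Icc (l + 1) K, τ ^ (t - l - 1) * μ t

theorem discountedTail_of_lt [CommSemiring R] (τ : R) (μ : ℕ → R) {K l : ℕ} (h : K < l + 1) :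
    discountedTail τ μ K l = 0 := by
  rw [discountedTail, Icc_eq_empty_of_lt h, sum_empty]

theorem discountedTail_eq_add [CommSemiring R] (τ : R) (μ : ℕ → R) {K l : ℕ} (h : l + 1 ≤ K) :
    discountedTail τ μ K l = μ (l + 1) + τ * discountedTail τ μ K (l + 1) := by
  rw [discountedTail, ← insert_Icc_add_one_left_eq_Icc h, sum_insert (by simp),
    discountedTail, mul_sum, add_tsub_cancel_left, Nat.sub_self, pow_zero, one_mul]
  congr 1
  refine sum_congr rfl fun t ht => ?_
  rw [← mul_assoc, ← pow_succ']
  congr 2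
  have := (mem_Icc.1 ht).1
  omega

theorem discountedTail_eq_zero_iff [CommRing R] [LinearOrder R] [IsStrictOrderedRing R]
    {τ : R} (hτ : 0 < τ) {μ : ℕ → R} {K l : ℕ} (hμ : ∀ t ∈ Icc (l + 1) K, 0 ≤ μ t) :
    discountedTail τ μ K l = 0 ↔ ∀ t ∈ Icc (l + 1) K, μ t = 0 := by
  rw [discountedTail,
    sum_eq_zero_iff_of_nonneg fun t ht => mul_nonneg (pow_pos hτ _).le (hμ t ht)]
  exact forall₂_congr fun t _ => by rw [mul_eq_zero, or_iff_right (pow_pos hτ _).ne']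

end DiscountedTail

theorem temp_limit_active_of_relaxation_tight_general
    (K : ℕ) (η τ : ℝ) (hη : 0 < η) (hτ : 0 < τ)
    (μT : ℕ → ℝ) (hμT : ∀ t, 1 ≤ t → t ≤ K → 0 ≤ μT t)
    (μe : ℕ → ℝ)
    (hμe : ∀ l, l ≤ K - 1 →
      μe l = η * ∑ t ∈ Finset.Icc (l + 1) K, τ ^ (t - l - 1) * μT t)
    (k : ℕ) (hk : k ≤ K - 1)
    (hpos : 0 < μe k)
    (hlast : ∀ m, k < m → m ≤ K - 1 → μe m = 0) :
    0 < μT (k + 1) ∧ ∀ m, k + 1 < m → m ≤ K → μT m = 0 := by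
  replace hμe : ∀ l, l ≤ K - 1 → μe l = η * discountedTail τ μT K l := hμe
  have hkK : k + 1 ≤ K := by
    by_contra h
    rw [hμe k hk, discountedTail_of_lt τ μT (by omega), mul_zero] at hpos
    exact hpos.false
  have htail : discountedTail τ μT K (k + 1) = 0 := by
    rcases lt_or_ge (K - 1) (k + 1) with h | h
    · exact discountedTail_of_lt τ μT (by omega)
    · simpa [hη.ne'] using (hμe (k + 1) h).symm.trans (hlast (k + 1) (by omega) h)
  have hvanish := (discountedTail_eq_zero_iff hτ fun t ht =>
    hμT t (by grind) (mem_Icc.1 ht).2).1 htail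
  refine ⟨?_, fun m hm hmK => hvanish m (mem_Icc.2 ⟨hm, hmK⟩)⟩
  rw [hμe k hk, discountedTail_eq_add τ μT hkK, htail, mul_zero, add_zero] at hpos
  exact pos_of_mul_pos_right hpos hη.le

/-- One direction of Corollary 1: if `k` is the largest index in `{0,…,K−1}` with
`μe k > 0`, then the temperature-limit multiplier satisfies `μT (k+1) > 0` and
`μT m = 0` for all `m` with `k+1 < m ≤ K`. -/
theorem temp_limit_active_of_relaxation_tight
    (K : ℕ) (hK : 1 ≤ K) (η τ : ℝ) (hη : 0 < η) (hτ : 0 < τ)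
    (μT : ℕ → ℝ) (hμT : ∀ t, 1 ≤ t → t ≤ K → 0 ≤ μT t)
    (μe : ℕ → ℝ)
    (hμe : ∀ l, l ≤ K - 1 →
      μe l = η * ∑ t ∈ Finset.Icc (l + 1) K, τ ^ (t - l - 1) * μT t)
    (k : ℕ) (hk : k ≤ K - 1)
    (hpos : 0 < μe k)
    (hlast : ∀ m, k < m → m ≤ K - 1 → μe m = 0) :
    0 < μT (k + 1) ∧ ∀ m, k + 1 < m → m ≤ K → μT m = 0 :=
  temp_limit_active_of_relaxation_tight_general K η τ hη hτ μT hμT μe hμe k hk hpos hlast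
end

section
/- Let M ≥ 1 be an integer and Δ > 0 a real, and let i_1, …, i_M be reals with 0 ≤ i_m ≤ Δ for every m ∈ {1,…,M}. Then ∑_{m=1}^{M} (2m − 1)·Δ·i_m ≥ (∑_{m=1}^{M} i_m)². -/
/-! The square grows by `(S + x)² - S² = (2S + x)·x` when a segment `x` is appended to a partial
sum `S`. After `n` full-width segments `S ≤ nΔ`, and `x ≤ Δ`, so this increment is at most
`(2n + 1)Δx`, exactly the slope of segment `n + 1`; summing over the segments gives the bound. -/

variable {R : Type*} [CommRing R] [LinearOrder R] [IsStrictOrderedRing R]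

lemma sq_add_le_sq_add_odd_mul {S x Δ c : R} (hS : S ≤ c * Δ) (hx₀ : 0 ≤ x) (hxΔ : x ≤ Δ) :
    (S + x) ^ 2 ≤ S ^ 2 + (2 * c + 1) * Δ * x := by
  have hSx : S * x ≤ c * Δ * x := mul_le_mul_of_nonneg_right hS hx₀
  have hxx : x * x ≤ Δ * x := mul_le_mul_of_nonneg_right hxΔ hx₀
  linear_combination 2 * hSx + hxx

lemma sq_sum_Icc_le_sum_odd_mul {Δ : R} (x : ℕ → R) :
    ∀ n : ℕ, (∀ m ∈ Finset.Icc 1 n, 0 ≤ x m ∧ x m ≤ Δ) →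
      (∑ m ∈ Finset.Icc 1 n, x m) ^ 2 ≤ ∑ m ∈ Finset.Icc 1 n, (2 * (m : R) - 1) * Δ * x m
  | 0, _ => by simp
  | n + 1, hx => by
    have hx' : ∀ m ∈ Finset.Icc 1 n, 0 ≤ x m ∧ x m ≤ Δ := fun m hm =>
      hx m (Finset.Icc_subset_Icc_right n.le_succ hm)
    have hlast := hx (n + 1) (Finset.right_mem_Icc.mpr n.succ_pos)
    have hsum : ∑ m ∈ Finset.Icc 1 n, x m ≤ n * Δ := by
      simpa using Finset.sum_le_card_nsmul _ x Δ fun m hm => (hx' m hm).2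
    rw [Finset.sum_Icc_succ_top n.succ_pos, Finset.sum_Icc_succ_top n.succ_pos]
    calc (∑ m ∈ Finset.Icc 1 n, x m + x (n + 1)) ^ 2
        ≤ (∑ m ∈ Finset.Icc 1 n, x m) ^ 2 + (2 * (n : R) + 1) * Δ * x (n + 1) :=
          sq_add_le_sq_add_odd_mul hsum hlast.1 hlast.2
      _ ≤ ∑ m ∈ Finset.Icc 1 n, (2 * (m : R) - 1) * Δ * x m
            + (2 * ((n + 1 : ℕ) : R) - 1) * Δ * x (n + 1) := by
          push_cast
          linarith [sq_sum_Icc_le_sum_odd_mul x n hx']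

theorem pwl_overestimates_square_general
    (M : ℕ) (Δ : ℝ)
    (i : ℕ → ℝ)
    (hi : ∀ m ∈ Finset.Icc 1 M, 0 ≤ i m ∧ i m ≤ Δ) :
    (∑ m ∈ Finset.Icc 1 M, i m) ^ 2
      ≤ ∑ m ∈ Finset.Icc 1 M, (2 * (m : ℝ) - 1) * Δ * i m :=
  sq_sum_Icc_le_sum_odd_mul i M hi

/-- The relaxed PWL model over-estimates the quadratic term: with segment
variables `i m ∈ [0, Δ]` for `m ∈ {1,…,M}` and slopes `(2m−1)·Δ`, the surrogate
`∑ (2m−1)·Δ·i m` dominates `(∑ i m)²`. -/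
theorem pwl_overestimates_square
    (M : ℕ) (hM : 1 ≤ M) (Δ : ℝ) (hΔ : 0 < Δ)
    (i : ℕ → ℝ)
    (hi : ∀ m ∈ Finset.Icc 1 M, 0 ≤ i m ∧ i m ≤ Δ) :
    (∑ m ∈ Finset.Icc 1 M, i m) ^ 2
      ≤ ∑ m ∈ Finset.Icc 1 M, (2 * (m : ℝ) - 1) * Δ * i m :=
  pwl_overestimates_square_general M Δ i hi
end

section
/- Let K ≥ 1 be an integer and τ ≥ 0, ε > 0 reals, and let μ_T : {1,…,K} → ℝ satisfy μ_T(j) ≥ 0 for all j. Suppose λ_T : {1,…,K} → ℝ satisfies λ_T(K) = −μ_T(K) − ε and λ_T(j) = τ·λ_T(j+1) − μ_T(j) − ε for all 1 ≤ j ≤ K−1. Then λ_T(j) < 0 for every j ∈ {1,…,K}; consequently, for any η > 0, the quantities μ_e(j) := −η·λ_T(j) are strictly positive for every j ∈ {1,…,K}. -/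
/-- Augmenting the objective with a temperature-deviation term `−ε·(T^max − T)`
(for `ε > 0`) makes the temperature-dynamics multiplier `λT` strictly negative
at all timesteps; hence, for any temperature gain `η > 0`, the quantities
`μe j = −η·λT j` are strictly positive at all timesteps. -/
theorem augmented_objective_forces_tightness
    (K : ℕ) (hK : 1 ≤ K) (τ ε : ℝ) (hτ : 0 ≤ τ) (hε : 0 < ε)
    (μT lamT : ℕ → ℝ)
    (hμT : ∀ j, 1 ≤ j → j ≤ K → 0 ≤ μT j)
    (hterm : lamT K = -μT K - ε)
    (hrec : ∀ j, 1 ≤ j → j ≤ K - 1 → lamT j = τ * lamT (j + 1) - μT j - ε) :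
    (∀ j, 1 ≤ j → j ≤ K → lamT j < 0) ∧
      ∀ η : ℝ, 0 < η → ∀ j, 1 ≤ j → j ≤ K → 0 < -η * lamT j := by
  have key : ∀ d j, 1 ≤ j → j ≤ K → K - j = d → lamT j < 0 := by
    intro d
    induction d with
    | zero =>
      intro j h1 h2 hd
      have : j = K := le_antisymm h2 (Nat.le_of_sub_eq_zero hd)
      subst this
      have := hμT j h1 h2
      rw [hterm]; linarith
    | succ n ih =>
      intro j h1 h2 hd
      have hjlt : j < K := by omega
      have hj1 : j ≤ K - 1 := by omega
      have hnext : lamT (j + 1) < 0 := ih (j + 1) (by omega) (by omega) (by omega)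
      have hμ := hμT j h1 h2
      rw [hrec j h1 hj1]
      have : τ * lamT (j + 1) ≤ 0 := mul_nonpos_of_nonneg_of_nonpos hτ hnext.le
      linarith
  have main : ∀ j, 1 ≤ j → j ≤ K → lamT j < 0 := fun j h1 h2 => key (K - j) j h1 h2 rfl
  exact ⟨main, fun η hη j h1 h2 => by
    have := main j h1 h2; nlinarith⟩
end
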